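/- arXiv:1102.2606 — 4 statements merged into one kernel-verified Lean document; each statement's English description precedes it below -/
import Mathlib

section
/- Let A be a complete doubly filtered K-algebra and let M be an A-module equipped with a good double filtration (F₀M, F_•(gr₀M)). Then M is a finitely generated A-module. -/
/-!
STATEMENT 3: Let `A` be a complete doubly filtered `K`-algebra and let `M` be an `A`-module
equipped with a good double filtration `(F₀M, F_•(gr₀M))`.  Then `M` is a finitely generated
`A`-module.

Here `R` is a complete discrete valuation ring with uniformizer `π`, residue field `k` and field
of fractions `K`; a (complete) doubly filtered `K`-algebra consists of an `R`-subalgebra lattice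
`F₀A` of `A` and a (complete) `ℤ`-filtration on the slice `gr₀A = F₀A/πF₀A`, with `F₀A`
`π`-adically complete; a double filtration on `M` consists of an `F₀A`-stable `R`-lattice `F₀M`
and a compatible `ℤ`-filtration on `gr₀M = F₀M/πF₀M`; it is good if the filtration on `gr₀M` is
separated and the associated graded module `Gr(M)` is finitely generated over `Gr(A)`.

Implementation notes: filtrations on the slices are recorded via their full preimages, and the
associated graded ring `Gr(A)` and module `Gr(M)` are recorded by arbitrary realizations `C`
resp. `D`, which determine them uniquely up to isomorphism (see the structures below).
-/

/-- A complete doubly filtered `K`-algebra: the data of an `R`-subalgebra `F₀A` of `A` which is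
an `R`-lattice, a `π`-adic completeness condition on `F₀A`, and a complete, exhaustive,
increasing, multiplicative `ℤ`-filtration on the slice `F₀A/πF₀A`, recorded via its full
preimages `G i` (submodules of `A` squeezed between `πF₀A` and `F₀A`). -/
structure CompleteDoublyFiltered
    (R : Type*) [CommRing R] (π : R)
    (K : Type*) [Field K] [Algebra R K]
    (A : Type*) [Ring A] [Algebra R A] [Algebra K A] [IsScalarTower R K A] where
  F0 : Subalgebra R A
  /-- `K · F₀A = A`. -/
  latticeSpan : Submodule.span K (F0 : Set A) = ⊤
  /-- `⋂_a π^a F₀A = 0`. -/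
  latticeSep : (⨅ a : ℕ, Submodule.map ((π ^ a) • (LinearMap.id : A →ₗ[R] A))
      F0.toSubmodule) = ⊥
  /-- `F₀A` is `π`-adically complete: every `π`-adic Cauchy sequence in `F₀A` converges. -/
  complete_pi : ∀ x : ℕ → A, (∀ n, x n ∈ F0) →
    (∀ n, x (n + 1) - x n ∈
      Submodule.map ((π ^ n) • (LinearMap.id : A →ₗ[R] A)) F0.toSubmodule) →
    ∃ y ∈ F0, ∀ n, y - x n ∈
      Submodule.map ((π ^ n) • (LinearMap.id : A →ₗ[R] A)) F0.toSubmodule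
  /-- The full preimage in `F₀A` of the `i`-th piece of the slice filtration. -/
  G : ℤ → Submodule R A
  G_le : ∀ i, G i ≤ F0.toSubmodule
  piF0_le_G : ∀ i, Submodule.map (π • (LinearMap.id : A →ₗ[R] A)) F0.toSubmodule ≤ G i
  /-- The slice filtration is increasing. -/
  mono : Monotone G
  /-- The slice filtration is exhaustive. -/
  exhaustive : ∀ x ∈ F0, ∃ i : ℤ, x ∈ G i
  one_mem : (1 : A) ∈ G 0
  mul_mem : ∀ {i j : ℤ} {x y : A}, x ∈ G i → y ∈ G j → x * y ∈ G (i + j)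
  /-- The filtration on the slice `gr₀A` is complete: every Cauchy sequence in the slice
  converges to a unique limit. -/
  complete_slice : ∀ x : ℕ → A, (∀ n, x n ∈ F0) →
    (∀ n : ℕ, x (n + 1) - x n ∈ G (-(n : ℤ))) →
    ∃ y ∈ F0, (∀ n : ℕ, y - x n ∈ G (-(n : ℤ))) ∧
      ∀ z ∈ F0, (∀ n : ℕ, z - x n ∈ G (-(n : ℤ))) →
        z - y ∈ Submodule.map (π • (LinearMap.id : A →ₗ[R] A)) F0.toSubmodule

/-- A realization of the associated graded ring `Gr(A) = gr(gr₀A)` of the slice of a complete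
doubly filtered `K`-algebra: a ring `C` with symbol maps `σ i : G i → C` having kernel
`G (i - 1)`, compatible with multiplication and units, such that `C` is the internal direct sum
of the images of the symbol maps. -/
structure GrRealization
    {R : Type*} [CommRing R] {π : R}
    {K : Type*} [Field K] [Algebra R K]
    {A : Type*} [Ring A] [Algebra R A] [Algebra K A] [IsScalarTower R K A]
    (S : CompleteDoublyFiltered R π K A)
    (C : Type*) [Ring C] where
  σ : ∀ i : ℤ, (S.G i) →+ C
  σ_ker : ∀ (i : ℤ) (x : S.G i), σ i x = 0 ↔ (x : A) ∈ S.G (i - 1)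
  σ_one : ∀ h : (1 : A) ∈ S.G 0, σ 0 ⟨1, h⟩ = 1
  σ_mul : ∀ (i j : ℤ) (x : S.G i) (y : S.G j) (h : (x : A) * (y : A) ∈ S.G (i + j)),
    σ (i + j) ⟨(x : A) * (y : A), h⟩ = σ i x * σ j y
  internal : DirectSum.IsInternal (fun i : ℤ => (σ i).range)

/-- A double filtration on a module `M` over a complete doubly filtered `K`-algebra `A`: an
`F₀A`-stable `R`-lattice `F₀M` in `M` together with an exhaustive increasing `ℤ`-filtration on
the slice `gr₀M = F₀M/πF₀M` compatible with the slice filtration of `A`, recorded via its full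
preimages `H i` (submodules of `M` squeezed between `πF₀M` and `F₀M`).  The separatedness
condition (`⋂ᵢ Hᵢ = πF₀M`, i.e. the filtration on `gr₀M` is separated) required of a *good*
double filtration is included as the field `separated`. -/
structure GoodDoubleFiltration
    {R : Type*} [CommRing R] {π : R}
    {K : Type*} [Field K] [Algebra R K]
    {A : Type*} [Ring A] [Algebra R A] [Algebra K A] [IsScalarTower R K A]
    (S : CompleteDoublyFiltered R π K A)
    (M : Type*) [AddCommGroup M] [Module A M]
    [Module R M] [IsScalarTower R A M] [Module K M] [IsScalarTower K A M] where
  F0M : Submodule R M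
  /-- `F₀M` is an `F₀A`-submodule of `M`. -/
  F0_smul_mem : ∀ a ∈ S.F0, ∀ m ∈ F0M, a • m ∈ F0M
  /-- `K · F₀M = M`. -/
  latticeSpan : Submodule.span K (F0M : Set M) = ⊤
  /-- `⋂_a π^a F₀M = 0`. -/
  latticeSep : (⨅ a : ℕ, Submodule.map ((π ^ a) • (LinearMap.id : M →ₗ[R] M)) F0M) = ⊥
  /-- The full preimage in `F₀M` of the `i`-th piece of the filtration of the slice `gr₀M`. -/
  H : ℤ → Submodule R M
  H_le : ∀ i, H i ≤ F0M
  piF0M_le_H : ∀ i, Submodule.map (π • (LinearMap.id : M →ₗ[R] M)) F0M ≤ H i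
  mono : Monotone H
  exhaustive : ∀ m ∈ F0M, ∃ i : ℤ, m ∈ H i
  smul_mem : ∀ {i j : ℤ} {a : A} {m : M}, a ∈ S.G i → m ∈ H j → a • m ∈ H (i + j)
  /-- The filtration on the slice `gr₀M` is separated. -/
  separated : (⨅ i : ℤ, H i) ≤ Submodule.map (π • (LinearMap.id : M →ₗ[R] M)) F0M

/-- A realization of the associated graded module `Gr(M) = gr(gr₀M)` of a doubly filtered module
`M`: a module `D` over a realization `C` of `Gr(A)`, with symbol maps `τ i : H i → D` having
kernel `H (i - 1)`, compatible with the action of symbols of `A`, such that `D` is the internal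
direct sum of the images of the `τ i`. -/
structure GrModuleRealization
    {R : Type*} [CommRing R] {π : R}
    {K : Type*} [Field K] [Algebra R K]
    {A : Type*} [Ring A] [Algebra R A] [Algebra K A] [IsScalarTower R K A]
    {S : CompleteDoublyFiltered R π K A}
    {C : Type*} [Ring C] (grA : GrRealization S C)
    {M : Type*} [AddCommGroup M] [Module A M]
    [Module R M] [IsScalarTower R A M] [Module K M] [IsScalarTower K A M]
    (FM : GoodDoubleFiltration S M)
    (D : Type*) [AddCommGroup D] [Module C D] where
  τ : ∀ i : ℤ, (FM.H i) →+ D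
  τ_ker : ∀ (i : ℤ) (m : FM.H i), τ i m = 0 ↔ (m : M) ∈ FM.H (i - 1)
  τ_smul : ∀ (i j : ℤ) (a : S.G i) (m : FM.H j) (h : (a : A) • (m : M) ∈ FM.H (i + j)),
    τ (i + j) ⟨(a : A) • (m : M), h⟩ = grA.σ i a • τ j m
  internal : DirectSum.IsInternal (fun i : ℤ => (τ i).range)

set_option maxHeartbeats 1000000
set_option synthInstance.maxHeartbeats 1000000

section Aux

variable {R : Type*} [CommRing R] {π : R}
    {K : Type*} [Field K] [Algebra R K]
    {A : Type*} [Ring A] [Algebra R A] [Algebra K A] [IsScalarTower R K A]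
    {S : CompleteDoublyFiltered R π K A}
    {C : Type*} [Ring C] {grA : GrRealization S C}
    {M : Type*} [AddCommGroup M] [Module A M]
    [Module R M] [IsScalarTower R A M] [Module K M] [IsScalarTower K A M]
    {FM : GoodDoubleFiltration S M}
    {D : Type*} [AddCommGroup D] [Module C D] (grM : GrModuleRealization grA FM D)

set_option synthInstance.maxHeartbeats 800000 in
/-- The additive equivalence `⨁ i, range (τ i) ≃+ D` coming from internality. -/
noncomputable def eD : (DirectSum ℤ fun i => (grM.τ i).range) ≃+ D :=
  AddEquiv.ofBijective (DirectSum.coeAddMonoidHom fun i => (grM.τ i).range) grM.internal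

/-- Projection onto the `i`-th graded piece of `D`. -/
noncomputable def projD (i : ℤ) : D →+ D where
  toFun x := (((eD grM).symm x) i : D)
  map_zero' := by simp
  map_add' x y := by simp

lemma projD_apply_of_mem {k : ℤ} {x : D} (hx : x ∈ (grM.τ k).range) (i : ℤ) :
    projD grM i x = if i = k then x else 0 := by
  have h1 : (eD grM) (DirectSum.of (fun i => ((grM.τ i).range : AddSubgroup D)) k ⟨x, hx⟩) = x := by
    simp only [eD] ; exact DirectSum.coeAddMonoidHom_of (fun i => (grM.τ i).range) k ⟨x, hx⟩
  have h2 : (eD grM).symm x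
      = DirectSum.of (fun i => ((grM.τ i).range : AddSubgroup D)) k ⟨x, hx⟩ := by
    rw [AddEquiv.symm_apply_eq]; exact h1.symm
  show (((eD grM).symm x) i : D) = _
  rw [h2, DirectSum.of_apply]
  by_cases h : k = i
  · subst h; simp
  · simp [h, Ne.symm h]
lemma memD_closure (x : D) :
    x ∈ AddSubgroup.closure (⋃ l : ℤ, ((grM.τ l).range : Set D)) := by
  have hx : x = (eD grM) ((eD grM).symm x) := ((eD grM).apply_symm_apply x).symm
  rw [hx]
  generalize ((eD grM).symm x) = y
  induction y using DirectSum.induction_on with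
  | zero => rw [map_zero]; exact zero_mem _
  | of k z =>
      have : (eD grM) (DirectSum.of (fun i => ((grM.τ i).range : AddSubgroup D)) k z)
          = (z : D) := by
        simp only [eD]
        exact DirectSum.coeAddMonoidHom_of (fun i => (grM.τ i).range) k z
      rw [this]
      exact AddSubgroup.subset_closure (Set.mem_iUnion.2 ⟨k, z.2⟩)
  | add a b ha hb =>
      rw [map_add]; exact add_mem ha hb

lemma memC_closure (grA : GrRealization S C) (c : C) :
    c ∈ AddSubgroup.closure (⋃ l : ℤ, ((grA.σ l).range : Set C)) := by
  obtain ⟨y, rfl⟩ := grA.internal.2 c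
  induction y using DirectSum.induction_on with
  | zero => rw [map_zero]; exact zero_mem _
  | of k z =>
      rw [DirectSum.coeAddMonoidHom_of]
      exact AddSubgroup.subset_closure (Set.mem_iUnion.2 ⟨k, z.2⟩)
  | add a b ha hb =>
      rw [map_add]; exact add_mem ha hb

lemma tau_congr {i i' : ℤ} (h : i = i') (m : M) (h1 : m ∈ FM.H i) (h2 : m ∈ FM.H i') :
    grM.τ i ⟨m, h1⟩ = grM.τ i' ⟨m, h2⟩ := by subst h; rfl

lemma projD_smul (k i : ℤ) (a : S.G k) (x : D) :
    projD grM i (grA.σ k a • x) = grA.σ k a • projD grM (i - k) x := by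
  have hx := memD_closure grM x
  induction hx using AddSubgroup.closure_induction with
  | mem z hz =>
      obtain ⟨l, hl⟩ := Set.mem_iUnion.1 hz
      obtain ⟨m, hm⟩ := hl
      have hsm : (a : A) • (m : M) ∈ FM.H (k + l) := FM.smul_mem a.2 m.2
      have key : grA.σ k a • z ∈ (grM.τ (k + l)).range := by
        rw [← hm, ← grM.τ_smul k l a m hsm]
        exact ⟨_, rfl⟩
      rw [projD_apply_of_mem grM key i, projD_apply_of_mem grM ⟨m, hm⟩ (i - k)]
      by_cases h : i = k + l
      · rw [if_pos h, if_pos (by omega)]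
      · rw [if_neg h, if_neg (by omega), smul_zero]
  | zero => rw [smul_zero, map_zero, map_zero, smul_zero]
  | add y z _ _ hy hz => rw [smul_add, map_add, map_add, smul_add, hy, hz]
  | neg y _ hy => rw [smul_neg, map_neg, map_neg, smul_neg, hy]
variable {n : ℕ} {d : Fin n → ℤ} {mj : Fin n → M}

lemma sum_mem_H (hm : ∀ j, mj j ∈ FM.H (d j)) (i : ℤ) {a : Fin n → A}
    (ha : ∀ j, a j ∈ S.G (i - d j)) : (∑ j, a j • mj j) ∈ FM.H i :=
  Submodule.sum_mem _ fun j _ => by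
    have := FM.smul_mem (ha j) (hm j)
    rwa [sub_add_cancel] at this

/-- The subgroup of elements of `D` of the form `τ i (∑ aⱼ • mⱼ)` with `aⱼ ∈ G (i - dⱼ)`. -/
def Qgrp (grM : GrModuleRealization grA FM D) (hm : ∀ j, mj j ∈ FM.H (d j)) (i : ℤ) :
    AddSubgroup D where
  carrier := {x | ∃ a : Fin n → A, ∃ ha : ∀ j, a j ∈ S.G (i - d j),
    x = grM.τ i ⟨∑ j, a j • mj j, sum_mem_H hm i ha⟩}
  zero_mem' := by
    refine ⟨0, fun j => zero_mem _, ?_⟩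
    have h0 : (⟨∑ j, (0 : Fin n → A) j • mj j, sum_mem_H hm i fun j => zero_mem _⟩ :
        FM.H i) = 0 := by
      apply Subtype.ext
      simp
    rw [h0, map_zero]
  add_mem' := by
    rintro x y ⟨a, ha, rfl⟩ ⟨b, hb, rfl⟩
    refine ⟨a + b, fun j => add_mem (ha j) (hb j), ?_⟩
    rw [← map_add]
    congr 1
    apply Subtype.ext
    show (∑ j, a j • mj j) + (∑ j, b j • mj j) = ∑ j, (a + b) j • mj j
    rw [← Finset.sum_add_distrib]
    exact Finset.sum_congr rfl fun j _ => by rw [Pi.add_apply, add_smul]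
  neg_mem' := by
    rintro x ⟨a, ha, rfl⟩
    refine ⟨-a, fun j => neg_mem (ha j), ?_⟩
    rw [← map_neg]
    congr 1
    apply Subtype.ext
    show -(∑ j, a j • mj j) = ∑ j, (-a) j • mj j
    rw [← Finset.sum_neg_distrib]
    exact Finset.sum_congr rfl fun j _ => by rw [Pi.neg_apply, neg_smul]

lemma smul_mem_Qgrp (hm : ∀ j, mj j ∈ FM.H (d j)) (k i : ℤ) (a : S.G k) {x : D}
    (hx : x ∈ Qgrp grM hm (i - k)) : grA.σ k a • x ∈ Qgrp grM hm i := by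
  obtain ⟨b, hb, rfl⟩ := hx
  have hs : (a : A) • (∑ j, b j • mj j) ∈ FM.H (k + (i - k)) :=
    FM.smul_mem a.2 (sum_mem_H hm (i - k) hb)
  rw [← grM.τ_smul k (i - k) a ⟨∑ j, b j • mj j, sum_mem_H hm (i - k) hb⟩ hs]
  have hc : ∀ j, (a : A) * b j ∈ S.G (i - d j) := fun j => by
    have := S.mul_mem a.2 (hb j)
    rwa [show k + (i - k - d j) = i - d j by ring] at this
  refine ⟨fun j => (a : A) * b j, hc, ?_⟩
  have hval : (a : A) • (∑ j, b j • mj j) = ∑ j, ((a : A) * b j) • mj j := by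
    rw [Finset.smul_sum]
    exact Finset.sum_congr rfl fun j _ => (smul_smul _ _ _)
  have h1 : grM.τ (k + (i - k)) ⟨(a : A) • (∑ j, b j • mj j), hs⟩
      = grM.τ (k + (i - k)) ⟨∑ j, ((a : A) * b j) • mj j, hval ▸ hs⟩ := by
    congr 1
    exact Subtype.ext hval
  rw [h1]
  exact tau_congr grM (by ring) _ _ _

/-- The subgroup of `x : D` all of whose components lie in the corresponding `Qgrp`. -/
def Wgrp (grM : GrModuleRealization grA FM D) (hm : ∀ j, mj j ∈ FM.H (d j)) :
    AddSubgroup D where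
  carrier := {x | ∀ i, projD grM i x ∈ Qgrp grM hm i}
  zero_mem' := fun i => by rw [map_zero]; exact zero_mem _
  add_mem' := fun hx hy i => by rw [map_add]; exact add_mem (hx i) (hy i)
  neg_mem' := fun hx i => by rw [map_neg]; exact neg_mem (hx i)

lemma smul_mem_Wgrp (hm : ∀ j, mj j ∈ FM.H (d j)) (c : C) {x : D}
    (hx : x ∈ Wgrp grM hm) : c • x ∈ Wgrp grM hm := by
  have hc := memC_closure grA c
  induction hc using AddSubgroup.closure_induction with
  | mem z hz =>
      obtain ⟨k, hk⟩ := Set.mem_iUnion.1 hz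
      obtain ⟨a, rfl⟩ := hk
      intro i
      rw [projD_smul grM k i a x]
      exact smul_mem_Qgrp grM hm k i a (hx (i - k))
  | zero => rw [zero_smul]; exact zero_mem _
  | add y z _ _ hy hz => rw [add_smul]; exact add_mem hy hz
  | neg y _ hy => rw [neg_smul]; exact neg_mem hy
lemma lemB (hm : ∀ j, mj j ∈ FM.H (d j))
    (hspan : Submodule.span C (Set.range fun j => grM.τ (d j) ⟨mj j, hm j⟩) = ⊤)
    (i : ℤ) (m : M) (hmem : m ∈ FM.H i) :
    ∃ a : Fin n → A, (∀ j, a j ∈ S.G (i - d j)) ∧ m - ∑ j, a j • mj j ∈ FM.H (i - 1) := by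
  classical
  -- the generators lie in `W`
  have hgen : ∀ j₀ : Fin n, grM.τ (d j₀) ⟨mj j₀, hm j₀⟩ ∈ Wgrp grM hm := by
    intro j₀ i'
    rw [projD_apply_of_mem grM ⟨⟨mj j₀, hm j₀⟩, rfl⟩ i']
    by_cases h : i' = d j₀
    · rw [if_pos h]
      subst h
      refine ⟨fun j => if j = j₀ then 1 else 0, ?_, ?_⟩
      · intro j
        show (if j = j₀ then (1 : A) else 0) ∈ S.G (d j₀ - d j)
        by_cases hj : j = j₀
        · subst hj
          simp only [if_pos rfl]
          have := S.one_mem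
          rwa [show (0 : ℤ) = d j - d j by ring] at this
        · rw [if_neg hj]; exact zero_mem _
      · have hval : (∑ j, (if j = j₀ then (1 : A) else 0) • mj j) = mj j₀ := by
          rw [Finset.sum_eq_single j₀]
          · rw [if_pos rfl, one_smul]
          · intro j _ hj; rw [if_neg hj, zero_smul]
          · intro h; exact absurd (Finset.mem_univ j₀) h
        congr 1
        exact Subtype.ext hval.symm
    · rw [if_neg h]; exact zero_mem _
  -- every element of `D` lies in `W`
  have hW : ∀ x : D, x ∈ Wgrp grM hm := by
    intro x
    have hx : x ∈ Submodule.span C (Set.range fun j => grM.τ (d j) ⟨mj j, hm j⟩) := by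
      rw [hspan]; trivial
    induction hx using Submodule.span_induction with
    | mem z hz => obtain ⟨j₀, rfl⟩ := hz; exact hgen j₀
    | zero => exact zero_mem _
    | add y z _ _ hy hz => exact add_mem hy hz
    | smul c y _ hy => exact smul_mem_Wgrp grM hm c hy
  -- conclude
  have h1 : projD grM i (grM.τ i ⟨m, hmem⟩) ∈ Qgrp grM hm i := hW _ i
  rw [projD_apply_of_mem grM ⟨⟨m, hmem⟩, rfl⟩ i, if_pos rfl] at h1
  obtain ⟨a, ha, heq⟩ := h1
  refine ⟨a, ha, ?_⟩
  have h2 : grM.τ i (⟨m, hmem⟩ - ⟨∑ j, a j • mj j, sum_mem_H hm i ha⟩) = 0 := by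
    rw [map_sub, ← heq, sub_self]
  have h3 := (grM.τ_ker i _).1 h2
  simpa using h3
end Aux

/-- Simple recursor with definitional unfolding. -/
def natRecAux {X : ℕ → Sort*} (x0 : X 0) (f : ∀ t, X t → X (t + 1)) : ∀ t, X t :=
  fun t => Nat.rec x0 f t

section Aux2

variable {R : Type*} [CommRing R] {π : R}
    {K : Type*} [Field K] [Algebra R K]
    {A : Type*} [Ring A] [Algebra R A] [Algebra K A] [IsScalarTower R K A]
    {S : CompleteDoublyFiltered R π K A}
    {C : Type*} [Ring C] {grA : GrRealization S C}
    {M : Type*} [AddCommGroup M] [Module A M]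
    [Module R M] [IsScalarTower R A M] [Module K M] [IsScalarTower K A M]
    {FM : GoodDoubleFiltration S M}
    {D : Type*} [AddCommGroup D] [Module C D] (grM : GrModuleRealization grA FM D)
    {n : ℕ} {d : Fin n → ℤ} {mj : Fin n → M}

lemma lemC (hm : ∀ j, mj j ∈ FM.H (d j))
    (hspan : Submodule.span C (Set.range fun j => grM.τ (d j) ⟨mj j, hm j⟩) = ⊤)
    (m : M) (hmem : m ∈ FM.F0M) :
    ∃ b : Fin n → A, (∀ j, b j ∈ S.F0) ∧
      m - ∑ j, b j • mj j ∈ Submodule.map (π • (LinearMap.id : M →ₗ[R] M)) FM.F0M := by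
  classical
  obtain ⟨i, hi⟩ := FM.exhaustive m hmem
  choose aStep haG haH using
    fun (i' : ℤ) (p : {q : M // q ∈ FM.H i'}) => lemB grM hm hspan i' p.1 p.2
  let g : ∀ t : ℕ, {q : M // q ∈ FM.H (i - (t : ℤ))} :=
    natRecAux ⟨m, by simpa using hi⟩
      (fun t p => ⟨p.1 - ∑ j, aStep (i - (t : ℤ)) p j • mj j, by
        have h := haH (i - (t : ℤ)) p
        rwa [show (i - (t : ℤ)) - 1 = i - (((t + 1 : ℕ)) : ℤ) by push_cast; ring] at h⟩)
  have hg : ∀ t : ℕ, (g (t + 1)).1 = (g t).1 - ∑ j, aStep (i - (t : ℤ)) (g t) j • mj j :=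
    fun t => rfl
  set a : ℕ → Fin n → A := fun t => aStep (i - (t : ℤ)) (g t) with ha_def
  have haG' : ∀ (t : ℕ) (j : Fin n), a t j ∈ S.G (i - (t : ℤ) - d j) :=
    fun t j => haG (i - (t : ℤ)) (g t) j
  -- the invariant
  have hinv : ∀ t : ℕ, m - ∑ j, (∑ u ∈ Finset.range t, a u j) • mj j = (g t).1 := by
    intro t
    induction t with
    | zero => simp [g, natRecAux]
    | succ t ih =>
        have : (∑ j, (∑ u ∈ Finset.range (t + 1), a u j) • mj j)
            = (∑ j, (∑ u ∈ Finset.range t, a u j) • mj j) + ∑ j, a t j • mj j := by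
          rw [← Finset.sum_add_distrib]
          exact Finset.sum_congr rfl fun j _ => by rw [Finset.sum_range_succ, add_smul]
        rw [this, hg t, ← ih]
        abel
  -- uniform shift
  set T : ℕ := Finset.univ.sup fun j => (i - d j).toNat with hT_def
  have hT : ∀ j, i - d j ≤ (T : ℤ) := by
    intro j
    refine le_trans (Int.self_le_toNat _) ?_
    exact_mod_cast Finset.le_sup (f := fun j => (i - d j).toNat) (Finset.mem_univ j)
  -- limits of the coefficient sequences
  have hcs : ∀ j : Fin n, ∃ y ∈ S.F0,
      (∀ nn : ℕ, y - (∑ u ∈ Finset.range (nn + T), a u j) ∈ S.G (-(nn : ℤ))) ∧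
      ∀ z ∈ S.F0, (∀ nn : ℕ, z - (∑ u ∈ Finset.range (nn + T), a u j) ∈ S.G (-(nn : ℤ))) →
        z - y ∈ Submodule.map (π • (LinearMap.id : A →ₗ[R] A)) S.F0.toSubmodule := by
    intro j
    refine S.complete_slice (fun nn => ∑ u ∈ Finset.range (nn + T), a u j) ?_ ?_
    · intro nn
      exact Submodule.sum_mem _ fun u _ => S.G_le _ (haG' u j)
    · intro nn
      have : (∑ u ∈ Finset.range (nn + 1 + T), a u j)
          - (∑ u ∈ Finset.range (nn + T), a u j) = a (nn + T) j := by
        rw [show nn + 1 + T = (nn + T) + 1 by ring, Finset.sum_range_succ]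
        abel
      rw [this]
      exact S.mono (by have := hT j; push_cast; omega) (haG' (nn + T) j)
  choose b hbF0 hbG _ using hcs
  refine ⟨b, hbF0, ?_⟩
  apply FM.separated
  rw [Submodule.mem_iInf]
  intro l
  set nn : ℕ := (i - T - l).toNat + (Finset.univ.sup fun j => (d j - l).toNat) with hnn_def
  have key : m - ∑ j, b j • mj j
      = (g (nn + T)).1 - ∑ j, (b j - ∑ u ∈ Finset.range (nn + T), a u j) • mj j := by
    rw [← hinv (nn + T)]
    have : (∑ j, (b j - ∑ u ∈ Finset.range (nn + T), a u j) • mj j)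
        = (∑ j, b j • mj j) - ∑ j, (∑ u ∈ Finset.range (nn + T), a u j) • mj j := by
      rw [← Finset.sum_sub_distrib]
      exact Finset.sum_congr rfl fun j _ => by rw [sub_smul]
    rw [this]
    abel
  rw [key]
  refine sub_mem ?_ (Submodule.sum_mem _ fun j _ => ?_)
  · refine FM.mono ?_ (g (nn + T)).2
    have h1 : i - T - l ≤ ((i - T - l).toNat : ℤ) := Int.self_le_toNat _
    push_cast
    omega
  · have hsm := FM.smul_mem (hbG j nn) (hm j)
    refine FM.mono ?_ hsm
    have h1 : d j - l ≤ ((d j - l).toNat : ℤ) := Int.self_le_toNat _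
    have h2 : (d j - l).toNat ≤ (Finset.univ.sup fun j => (d j - l).toNat) :=
      Finset.le_sup (f := fun j => (d j - l).toNat) (Finset.mem_univ j)
    push_cast
    omega

end Aux2
section Aux3

variable {R : Type*} [CommRing R] {π : R}
    {K : Type*} [Field K] [Algebra R K]
    {A : Type*} [Ring A] [Algebra R A] [Algebra K A] [IsScalarTower R K A]
    {S : CompleteDoublyFiltered R π K A}
    {C : Type*} [Ring C] {grA : GrRealization S C}
    {M : Type*} [AddCommGroup M] [Module A M]
    [Module R M] [IsScalarTower R A M] [Module K M] [IsScalarTower K A M]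
    {FM : GoodDoubleFiltration S M}
    {D : Type*} [AddCommGroup D] [Module C D] (grM : GrModuleRealization grA FM D)
    {n : ℕ} {d : Fin n → ℤ} {mj : Fin n → M}

lemma lemD (hm : ∀ j, mj j ∈ FM.H (d j))
    (hspan : Submodule.span C (Set.range fun j => grM.τ (d j) ⟨mj j, hm j⟩) = ⊤)
    (m : M) (hmem : m ∈ FM.F0M) : ∃ b : Fin n → A, m = ∑ j, b j • mj j := by
  classical
  choose cStep hcF0 hcMem using
    fun (p : {q : M // q ∈ FM.F0M}) => lemC grM hm hspan p.1 p.2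
  have step : ∀ p : {q : M // q ∈ FM.F0M}, ∃ u : {q : M // q ∈ FM.F0M},
      p.1 - ∑ j, cStep p j • mj j = π • u.1 := by
    intro p
    obtain ⟨u, hu, hueq⟩ := hcMem p
    refine ⟨⟨u, hu⟩, ?_⟩
    rw [← hueq]
    simp
  choose nxt hnxt using step
  let g : ℕ → {q : M // q ∈ FM.F0M} := natRecAux ⟨m, hmem⟩ (fun _ p => nxt p)
  have hg : ∀ t : ℕ, g (t + 1) = nxt (g t) := fun t => rfl
  set c : ℕ → Fin n → A := fun t => cStep (g t) with hc_def
  have hinv : ∀ t : ℕ,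
      m - ∑ j, (∑ u ∈ Finset.range t, π ^ u • c u j) • mj j = π ^ t • (g t).1 := by
    intro t
    induction t with
    | zero => simp [g, natRecAux]
    | succ t ih =>
        have hrec : (g t).1 = (∑ j, c t j • mj j) + π • (g (t + 1)).1 := by
          have := hnxt (g t)
          rw [← hg t] at this
          rw [← this]
          abel
        have hsum : (∑ j, (∑ u ∈ Finset.range (t + 1), π ^ u • c u j) • mj j)
            = (∑ j, (∑ u ∈ Finset.range t, π ^ u • c u j) • mj j)
              + ∑ j, (π ^ t • c t j) • mj j := by
          rw [← Finset.sum_add_distrib]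
          exact Finset.sum_congr rfl fun j _ => by rw [Finset.sum_range_succ, add_smul]
        have hterm : (∑ j, (π ^ t • c t j) • mj j) = π ^ t • ∑ j, c t j • mj j := by
          rw [Finset.smul_sum]
          exact Finset.sum_congr rfl fun j _ => smul_assoc _ _ _
        calc m - ∑ j, (∑ u ∈ Finset.range (t + 1), π ^ u • c u j) • mj j
            = (m - ∑ j, (∑ u ∈ Finset.range t, π ^ u • c u j) • mj j)
              - ∑ j, (π ^ t • c t j) • mj j := by rw [hsum]; abel
          _ = π ^ t • (g t).1 - π ^ t • ∑ j, c t j • mj j := by rw [ih, hterm]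
          _ = π ^ t • ((g t).1 - ∑ j, c t j • mj j) := by rw [smul_sub]
          _ = π ^ t • (π • (g (t + 1)).1) := by
              rw [hrec]; congr 1; abel
          _ = π ^ (t + 1) • (g (t + 1)).1 := by rw [smul_smul, ← pow_succ]
  have hcs : ∀ j : Fin n, ∃ y ∈ S.F0, ∀ nn : ℕ,
      y - (∑ u ∈ Finset.range nn, π ^ u • c u j) ∈
        Submodule.map ((π ^ nn) • (LinearMap.id : A →ₗ[R] A)) S.F0.toSubmodule := by
    intro j
    refine S.complete_pi (fun nn => ∑ u ∈ Finset.range nn, π ^ u • c u j) ?_ ?_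
    · intro nn
      exact Submodule.sum_mem S.F0.toSubmodule fun u _ =>
        Submodule.smul_mem S.F0.toSubmodule _ (hcF0 (g u) j)
    · intro nn
      show (∑ u ∈ Finset.range (nn + 1), π ^ u • c u j)
          - (∑ u ∈ Finset.range nn, π ^ u • c u j) ∈ _
      rw [Finset.sum_range_succ, add_sub_cancel_left]
      exact ⟨c nn j, hcF0 (g nn) j, by simp⟩
  choose b hbF0 hb using hcs
  refine ⟨b, ?_⟩
  have hbot : m - ∑ j, b j • mj j ∈
      (⨅ a : ℕ, Submodule.map ((π ^ a) • (LinearMap.id : M →ₗ[R] M)) FM.F0M) := by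
    rw [Submodule.mem_iInf]
    intro t
    have key : m - ∑ j, b j • mj j
        = π ^ t • (g t).1
          - ∑ j, (b j - ∑ u ∈ Finset.range t, π ^ u • c u j) • mj j := by
      rw [← hinv t]
      have : (∑ j, (b j - ∑ u ∈ Finset.range t, π ^ u • c u j) • mj j)
          = (∑ j, b j • mj j) - ∑ j, (∑ u ∈ Finset.range t, π ^ u • c u j) • mj j := by
        rw [← Finset.sum_sub_distrib]
        exact Finset.sum_congr rfl fun j _ => by rw [sub_smul]
      rw [this]
      abel
    rw [key]
    refine sub_mem ?_ (Submodule.sum_mem _ fun j _ => ?_)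
    · exact ⟨(g t).1, (g t).2, by simp⟩
    · obtain ⟨e, he, heq⟩ := hb j t
      have heq' : b j - ∑ u ∈ Finset.range t, π ^ u • c u j = π ^ t • e := by
        rw [← heq]; simp
      rw [heq', smul_assoc]
      exact ⟨e • mj j, FM.F0_smul_mem e he (mj j) (FM.H_le _ (hm j)), by simp⟩
  rw [FM.latticeSep, Submodule.mem_bot, sub_eq_zero] at hbot
  exact hbot

end Aux3
section Final

variable {R : Type*} [CommRing R] {π : R}
    {K : Type*} [Field K] [Algebra R K]
    {A : Type*} [Ring A] [Algebra R A] [Algebra K A] [IsScalarTower R K A]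
    {S : CompleteDoublyFiltered R π K A}
    {C : Type*} [Ring C] {grA : GrRealization S C}
    {M : Type*} [AddCommGroup M] [Module A M]
    [Module R M] [IsScalarTower R A M] [Module K M] [IsScalarTower K A M]
    {FM : GoodDoubleFiltration S M}
    {D : Type*} [AddCommGroup D] [Module C D] (grM : GrModuleRealization grA FM D)

lemma exists_gens (hgood : Module.Finite C D) :
    ∃ (n : ℕ) (d : Fin n → ℤ) (mj : Fin n → M) (hm : ∀ j, mj j ∈ FM.H (d j)),
      Submodule.span C (Set.range fun j => grM.τ (d j) ⟨mj j, hm j⟩) = ⊤ := by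
  classical
  set Hset : Set D := ⋃ l : ℤ, ((grM.τ l).range : Set D) with hHset
  have hHspan : Submodule.span C Hset = ⊤ := by
    rw [eq_top_iff]
    intro x _
    have hcl := memD_closure grM x
    have hle : AddSubgroup.closure Hset ≤ (Submodule.span C Hset).toAddSubgroup :=
      (AddSubgroup.closure_le _).2 Submodule.subset_span
    exact hle hcl
  obtain ⟨tset, htset⟩ := Module.Finite.fg_top (R := C) (M := D)
  have hmem : ∀ y : {y : D // y ∈ tset}, ∃ u : Finset D,
      (u : Set D) ⊆ Hset ∧ (y : D) ∈ Submodule.span C (u : Set D) := by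
    intro y
    have : (y : D) ∈ Submodule.span C Hset := by rw [hHspan]; trivial
    exact Submodule.mem_span_finite_of_mem_span this
  choose fu hfu1 hfu2 using hmem
  set U : Finset D := tset.attach.biUnion fu with hU
  have hU1 : (U : Set D) ⊆ Hset := by
    intro x hx
    simp only [hU, Finset.coe_biUnion, Set.mem_iUnion] at hx
    obtain ⟨y, _, hy⟩ := hx
    exact hfu1 y hy
  have hU2 : Submodule.span C (U : Set D) = ⊤ := by
    rw [eq_top_iff, ← htset]
    rw [Submodule.span_le]
    intro y hy
    have hsub : (fu ⟨y, hy⟩ : Set D) ⊆ (U : Set D) := by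
      intro z hz
      simp only [hU, Finset.coe_biUnion, Set.mem_iUnion]
      exact ⟨⟨y, hy⟩, Finset.mem_attach _ _, hz⟩
    exact Submodule.span_mono hsub (hfu2 ⟨y, hy⟩)
  set e : Fin U.card ≃ {x // x ∈ U} := U.equivFin.symm with he
  have hrange : ∀ j : Fin U.card, ∃ l : ℤ, ((e j : D)) ∈ (grM.τ l).range := by
    intro j
    exact Set.mem_iUnion.1 (hU1 (e j).2)
  choose dl hdl using hrange
  choose mhat hmhat using fun j => hdl j
  refine ⟨U.card, dl, fun j => ((mhat j : FM.H (dl j)) : M), fun j => (mhat j).2, ?_⟩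
  have hr : (Set.range fun j => grM.τ (dl j) ⟨((mhat j : FM.H (dl j)) : M), (mhat j).2⟩)
      = (U : Set D) := by
    ext x
    constructor
    · rintro ⟨j, rfl⟩
      show grM.τ (dl j) ⟨((mhat j : FM.H (dl j)) : M), (mhat j).2⟩ ∈ (U : Set D)
      have heta : (⟨((mhat j : FM.H (dl j)) : M), (mhat j).2⟩ : FM.H (dl j)) = mhat j := rfl
      rw [heta, hmhat j]
      exact (e j).2
    · intro hx
      refine ⟨e.symm ⟨x, hx⟩, ?_⟩
      have h2 : grM.τ (dl (e.symm ⟨x, hx⟩)) (mhat (e.symm ⟨x, hx⟩)) = (e (e.symm ⟨x, hx⟩) : D) :=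
        hmhat _
      rw [e.apply_symm_apply] at h2
      exact h2
  rw [hr]
  exact hU2

include grM in
lemma span_top (hgood : Module.Finite C D) :
    ∃ (n : ℕ) (mj : Fin n → M), Submodule.span A (Set.range mj) = ⊤ := by
  obtain ⟨n, d, mj, hm, hspan⟩ := exists_gens grM hgood
  refine ⟨n, mj, ?_⟩
  refine Submodule.eq_top_iff'.2 ?_
  intro m
  have hm' : m ∈ Submodule.span K (FM.F0M : Set M) := by rw [FM.latticeSpan]; trivial
  induction hm' using Submodule.span_induction with
  | mem x hx =>
      obtain ⟨b, rfl⟩ := lemD grM hm hspan x hx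
      exact Submodule.sum_mem _ fun j _ =>
        Submodule.smul_mem _ _ (Submodule.subset_span ⟨j, rfl⟩)
  | zero => exact zero_mem _
  | add y z _ _ hy hz => exact add_mem hy hz
  | smul k x _ hx =>
      rw [← algebraMap_smul (R := K) A k x]
      exact Submodule.smul_mem _ _ hx

end Final

theorem statement3
    (R : Type*) [CommRing R] [IsDomain R] [IsDiscreteValuationRing R]
    (π : R) (hπ : Irreducible π) [IsAdicComplete (Ideal.span {π}) R]
    (K : Type*) [Field K] [Algebra R K] [IsFractionRing R K]
    (A : Type*) [Ring A] [Algebra R A] [Algebra K A] [IsScalarTower R K A]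
    (S : CompleteDoublyFiltered R π K A)
    (C : Type*) [Ring C] (grA : GrRealization S C)
    (M : Type*) [AddCommGroup M] [Module A M]
    [Module R M] [IsScalarTower R A M] [Module K M] [IsScalarTower K A M]
    (FM : GoodDoubleFiltration S M)
    (D : Type*) [AddCommGroup D] [Module C D] (grM : GrModuleRealization grA FM D)
    (hgood : Module.Finite C D) :
    Module.Finite A M := by
  obtain ⟨n, mj, hspan⟩ := span_top grM hgood
  exact ⟨hspan ▸ Submodule.fg_span (Set.finite_range mj)⟩
end

section
/- Let K be a field of characteristic zero and let Φ be a finite reduced crystallographic root system in a finite-dimensional K-vector space, with a fixed system of positive roots and Weyl group W. Call an element μ of the ambient weight space dominant if ⟨μ, α^∨⟩ ∉ {−1, −2, −3, …} for every positive coroot α^∨. Then for every weight μ there exists w ∈ W such that w(μ) is dominant. -/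
/-!
STATEMENT 14: Let `K` be a field of characteristic zero and let `Φ` be a finite reduced
crystallographic root system in a finite-dimensional `K`-vector space, with a fixed system of
positive roots and Weyl group `W`.  Call an element `μ` of the ambient weight space dominant if
`⟨μ, α^∨⟩ ∉ {−1, −2, −3, …}` for every positive coroot `α^∨`.  Then for every weight `μ` there
exists `w ∈ W` such that `w(μ)` is dominant.

Implementation notes: the root system is encoded by Mathlib's `RootSystem` (with a finite index
type), which is crystallographic and reduced.  The system of positive roots is a finite set
`Pos` of indices such that every root is, up to sign, a positive root, and such that the
positive roots are `ℕ`-linearly independent (no nontrivial vanishing `ℕ`-linear combination) —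
this expresses that the positive roots are the roots positive with respect to a choice of
positivity.  The Weyl group is the group generated by the reflections in the roots, so an
element `w ∈ W` is a finite product of reflections, recorded by a list of indices.
-/

open RootPairing

/-- A root system: a root pairing whose roots span the ambient module (the older Mathlib
`RootSystem` structure, no longer present). -/
structure RootSystem (ι R M N : Type*) [CommRing R] [AddCommGroup M] [Module R M]
    [AddCommGroup N] [Module R N] extends RootPairing ι R M N where
  span_eq_top : Submodule.span R (Set.range root) = ⊤

/-- A finite set carrying an irreflexive transitive relation has a maximal element. -/
lemma statement14.exists_max_of_finite {α : Type*} {r : α → α → Prop}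
    (hirr : ∀ a, ¬ r a a) (htrans : ∀ a b c, r a b → r b c → r a c)
    {s : Set α} (hs : s.Finite) (hne : s.Nonempty) :
    ∃ m ∈ s, ∀ x ∈ s, ¬ r m x := by
  letI : IsIrrefl α (flip r) := ⟨hirr⟩
  letI : IsTrans α (flip r) := ⟨fun a b c h1 h2 => htrans c b a h2 h1⟩
  letI : IsStrictOrder α (flip r) := {}
  have hwf : s.WellFoundedOn (flip r) := hs.wellFoundedOn
  obtain ⟨x, hx⟩ := hne
  obtain ⟨⟨m, hm⟩, -, hmin⟩ := hwf.has_min Set.univ ⟨⟨x, hx⟩, trivial⟩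
  exact ⟨m, hm, fun y hy hr => hmin ⟨y, hy⟩ trivial hr⟩

theorem statement14
    (K : Type*) [Field K] [CharZero K]
    (V N : Type*) [AddCommGroup V] [Module K V] [FiniteDimensional K V]
    [AddCommGroup N] [Module K N]
    (ι : Type*) [Fintype ι]
    (P : RootSystem ι K V N)
    (hcrys : P.toRootPairing.IsCrystallographic)
    (hred : P.toRootPairing.IsReduced)
    (Pos : Finset ι)
    (hpos : ∀ i : ι, i ∈ Pos ∨ P.reflectionPerm i i ∈ Pos)
    (hindep : ∀ c : ι → ℕ, (∑ i ∈ Pos, (c i : ℕ) • P.root i) = 0 → ∀ i ∈ Pos, c i = 0)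
    (μ : V) :
    ∃ l : List ι,
      ∀ i ∈ Pos, ∀ n : ℕ,
        P.toLinearMap
            (((l.map fun j => P.toRootPairing.reflection j).prod : V ≃ₗ[K] V) μ)
            (P.coroot i) ≠ -(n + 1 : ℤ) := by
  classical
  set g : List ι → (V ≃ₗ[K] V) := fun l => (l.map fun j => P.toRootPairing.reflection j).prod
    with hg
  -- products of reflections send roots to roots
  have key : ∀ l : List ι, ∀ j : ι, ∃ k, (g l) (P.root j) = P.root k := by
    intro l
    induction l with
    | nil => exact fun j => ⟨j, rfl⟩
    | cons i t ih =>
      intro j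
      obtain ⟨k, hk⟩ := ih j
      refine ⟨P.reflectionPerm i k, ?_⟩
      have : g (i :: t) = P.toRootPairing.reflection i * g t := by
        simp [hg, List.prod_cons]
      rw [this]
      show P.toRootPairing.reflection i ((g t) (P.root j)) = _
      rw [hk, P.root_reflectionPerm i k]
  -- the set of such products is finite
  have hΨinj : Function.Injective (fun (e : V ≃ₗ[K] V) (i : ι) => e (P.root i)) := by
    intro e e' h
    have : (e : V →ₗ[K] V) = (e' : V →ₗ[K] V) := by
      apply LinearMap.ext_on P.span_eq_top
      rintro - ⟨i, rfl⟩
      exact congrFun h i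
    ext x
    exact LinearMap.congr_fun this x
  have hGfin : (Set.range g).Finite := by
    apply Set.Finite.of_finite_image (f := fun (e : V ≃ₗ[K] V) (i : ι) => e (P.root i))
    · apply Set.Finite.subset (Set.Finite.pi (fun _ : ι => Set.finite_range P.root))
      rintro - ⟨-, ⟨l, rfl⟩, rfl⟩
      intro i _
      obtain ⟨k, hk⟩ := key l i
      exact ⟨k, hk.symm⟩
    · exact hΨinj.injOn
  -- the orbit of μ is finite
  have hOrbfin : (Set.range fun l : List ι => (g l) μ).Finite := by
    apply Set.Finite.subset (hGfin.image fun e : V ≃ₗ[K] V => e μ)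
    rintro - ⟨l, rfl⟩
    exact ⟨g l, ⟨l, rfl⟩, rfl⟩
  -- the strict order: adding a nontrivial ℕ-combination of positive roots
  set r : V → V → Prop := fun a b =>
    ∃ c : ι → ℕ, (∃ i ∈ Pos, c i ≠ 0) ∧ b = a + ∑ i ∈ Pos, (c i) • P.root i with hr
  have hirr : ∀ a, ¬ r a a := by
    rintro a ⟨c, ⟨i, hi, hci⟩, heq⟩
    have hzero : (∑ i ∈ Pos, (c i) • P.root i) = 0 := by
      have := heq.symm
      rwa [add_eq_left] at this
    exact hci (hindep c hzero i hi)
  have htrans : ∀ a b c, r a b → r b c → r a c := by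
    rintro a b d ⟨c1, ⟨i, hi, hci⟩, h1⟩ ⟨c2, -, h2⟩
    refine ⟨c1 + c2, ⟨i, hi, fun h => hci (Nat.eq_zero_of_add_eq_zero_right h)⟩, ?_⟩
    rw [h2, h1]
    rw [add_assoc]
    congr 1
    rw [← Finset.sum_add_distrib]
    exact Finset.sum_congr rfl fun j _ => by simp [add_smul]
  -- take a maximal element of the orbit
  obtain ⟨m, ⟨l, hl⟩, hmax⟩ := statement14.exists_max_of_finite hirr htrans hOrbfin ⟨μ, [], rfl⟩
  refine ⟨l, fun i hi n hcon => ?_⟩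
  have hlm : (g l) μ = m := hl
  rw [show ((l.map fun j => P.toRootPairing.reflection j).prod : V ≃ₗ[K] V) μ = (g l) μ from rfl,
    hlm] at hcon
  -- otherwise reflect at i to get a strictly bigger element of the orbit
  have hx : (g (i :: l)) μ = m + (n + 1) • P.root i := by
    have h1 : g (i :: l) = P.toRootPairing.reflection i * g l := by
      simp [hg, List.prod_cons]
    rw [h1]
    show P.toRootPairing.reflection i ((g l) μ) = _
    rw [hlm, P.toRootPairing.reflection_apply]
    have hc : P.toRootPairing.coroot' i m = ((-(n + 1 : ℤ) : ℤ) : K) := by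
      rw [show P.toRootPairing.coroot' i m = P.toLinearMap m (P.coroot i) from
        rfl]
      exact_mod_cast hcon
    rw [hc]
    have hsmul : ((n : ℕ) + 1) • P.root i = (((n : K) + 1)) • P.root i := by
      rw [← Nat.cast_smul_eq_nsmul K (n + 1) (P.root i)]
      norm_num
    rw [hsmul]
    push_cast
    ring_nf
    module
  have hrmx : r m ((g (i :: l)) μ) := by
    refine ⟨fun j => if j = i then n + 1 else 0, ⟨i, hi, by simp⟩, ?_⟩
    rw [hx]
    congr 1
    symm
    rw [Finset.sum_eq_single i]
    · simp
    · intro b _ hb; simp [hb]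
    · intro h; exact absurd hi h
  exact hmax _ ⟨i :: l, rfl⟩ hrmx
end

section
/- Let R be a complete discrete valuation ring with residue field k and fraction field K, let V be a free R-module of rank 2m equipped with a symplectic form ω (an alternating R-bilinear form whose extensions ω_K to V ⊗_R K and ω_k to V ⊗_R k are nondegenerate), and let W be a free direct summand of V of rank t. Then W^⊥ := { v ∈ V : ω(v,w) = 0 for all w ∈ W } is a free direct summand of V of rank 2m − t. -/
/-!
STATEMENT 16: Let `R` be a complete discrete valuation ring with residue field `k` and fraction
field `K`, let `V` be a free `R`-module of rank `2m` equipped with a symplectic form `ω` (an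
alternating `R`-bilinear form whose extensions `ω_K` to `V ⊗_R K` and `ω_k` to `V ⊗_R k` are
nondegenerate), and let `W` be a free direct summand of `V` of rank `t`.  Then
`W^⊥ = { v ∈ V : ω v w = 0 for all w ∈ W }` is a free direct summand of `V` of rank `2m − t`.
-/

open TensorProduct

/-- The orthogonal complement `W^⊥ = { v : ω(v,w) = 0 for all w ∈ W }` of a submodule with
respect to a bilinear form. -/
def symplecticPerp {R V : Type*} [CommRing R] [AddCommGroup V] [Module R V]
    (ω : V →ₗ[R] V →ₗ[R] R) (W : Submodule R V) : Submodule R V where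
  carrier := {v : V | ∀ w ∈ W, ω v w = 0}
  add_mem' := by
    intro a b ha hb w hw
    simp [map_add, LinearMap.add_apply, ha w hw, hb w hw]
  zero_mem' := by
    intro w hw
    simp
  smul_mem' := by
    intro c v hv w hw
    simp [map_smul, LinearMap.smul_apply, hv w hw]

set_option maxHeartbeats 2000000 in
theorem statement16
    (R : Type*) [CommRing R] [IsDomain R] [IsDiscreteValuationRing R]
    (π : R) (hπ : Irreducible π) [IsAdicComplete (Ideal.span {π}) R]
    (K : Type*) [Field K] [Algebra R K] [IsFractionRing R K]
    (V : Type*) [AddCommGroup V] [Module R V] [Module.Free R V] [Module.Finite R V]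
    (m : ℕ) (hrank : Module.finrank R V = 2 * m)
    (ω : V →ₗ[R] V →ₗ[R] R)
    (halt : ∀ v : V, ω v v = 0)
    (hK : (LinearMap.BilinForm.baseChange K ω).Nondegenerate)
    (hk : (LinearMap.BilinForm.baseChange (IsLocalRing.ResidueField R) ω).Nondegenerate)
    (W : Submodule R V) (t : ℕ)
    (hWfree : Module.Free R W) (hWrank : Module.finrank R W = t)
    (hWsummand : ∃ U : Submodule R V, IsCompl W U) :
    Module.Free R (symplecticPerp ω W) ∧
    Module.finrank R (symplecticPerp ω W) = 2 * m - t ∧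
    ∃ U : Submodule R V, IsCompl (symplecticPerp ω W) U := by
  classical
  haveI := hWfree
  haveI : Module.Finite R W := inferInstance
  obtain ⟨Uw, hUw⟩ := hWsummand
  set ιW := Module.Free.ChooseBasisIndex R W with hιW
  set bW := Module.Free.chooseBasis R W with hbW
  set e : Module.Dual R W ≃ₗ[R] (ιW → R) := bW.dualBasis.equivFun with he
  -- the map `f : V → R^ιW`, `v ↦ ω v ∘ incl` in coordinates
  set f : V →ₗ[R] (ιW → R) := e.toLinearMap ∘ₗ ω.compl₂ W.subtype with hf
  have hNperp : symplecticPerp ω W = LinearMap.ker f := by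
    ext v
    constructor
    · intro hv
      simp only [LinearMap.mem_ker, hf, LinearMap.comp_apply]
      rw [LinearEquiv.coe_coe, LinearEquiv.map_eq_zero_iff]
      ext w
      exact hv w w.2
    · intro hv w hw
      have h0 : ω.compl₂ W.subtype v = 0 := by
        have := LinearMap.mem_ker.mp hv
        rw [hf, LinearMap.comp_apply, LinearEquiv.coe_coe, LinearEquiv.map_eq_zero_iff] at this
        exact this
      have := LinearMap.congr_fun h0 ⟨w, hw⟩
      simpa using this
  set N : Submodule R V := LinearMap.ker f with hN
  -- freeness instances
  haveI : Module.Free R N := inferInstance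
  haveI : Module.Finite R N := inferInstance
  haveI : Module.Finite R (LinearMap.range f) := inferInstance
  haveI : Module.Free R (LinearMap.range f) := inferInstance
  -- quotient is free, hence projective, hence there is a complement
  have equot : (V ⧸ N) ≃ₗ[R] LinearMap.range f := f.quotKerEquivRange
  haveI : Module.Free R (V ⧸ N) := Module.Free.of_equiv equot.symm
  haveI : Module.Finite R (V ⧸ N) := inferInstance
  haveI : Module.Projective R (V ⧸ N) := inferInstance
  clear_value N
  obtain ⟨g, hg⟩ := Module.projective_lifting_property N.mkQ LinearMap.id N.mkQ_surjective
  -- projection onto N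
  have hmem : ∀ x : V, x - g (N.mkQ x) ∈ N := by
    intro x
    have h := LinearMap.congr_fun hg (N.mkQ x)
    simp only [LinearMap.comp_apply, LinearMap.id_apply] at h
    rw [← Submodule.Quotient.mk_eq_zero, Submodule.Quotient.mk_sub, ← Submodule.mkQ_apply,
      ← Submodule.mkQ_apply, h, sub_self]
  set p : V →ₗ[R] N := LinearMap.codRestrict N (LinearMap.id - g ∘ₗ N.mkQ) hmem with hp
  have hpx : ∀ x : N, p x = x := by
    intro x
    ext
    simp only [hp, LinearMap.codRestrict_apply, LinearMap.sub_apply, LinearMap.id_apply,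
      LinearMap.comp_apply, Submodule.mkQ_apply]
    have h0 : (Submodule.Quotient.mk (x : V) : V ⧸ N) = 0 :=
      (Submodule.Quotient.mk_eq_zero N).mpr x.2
    rw [h0, map_zero, sub_zero]
  have hcompl : IsCompl N (LinearMap.ker p) := LinearMap.isCompl_of_proj hpx
  -- the cokernel of `f : V → Dual R W` is torsion
  have htors : Module.rank R ((ιW → R) ⧸ LinearMap.range f) = 0 := by
    rw [rank_eq_zero_iff]
    intro x
    obtain ⟨φ', rfl⟩ := (LinearMap.range f).mkQ_surjective x
    set φ : Module.Dual R W := e.symm φ' with hφ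
    -- extend φ to a functional ψ on V
    set ψ : V →ₗ[R] R := φ ∘ₗ Submodule.linearProjOfIsCompl W Uw hUw with hψ
    -- base-changed functional
    set ψK : (K ⊗[R] V) →ₗ[K] K :=
      (Algebra.TensorProduct.rid R K K).toLinearMap ∘ₗ LinearMap.baseChange K ψ with hψK
    have hψKtmul : ∀ w : V, ψK ((1 : K) ⊗ₜ[R] w) = algebraMap R K (ψ w) := by
      intro w
      simp [hψK, LinearMap.baseChange_tmul, Algebra.TensorProduct.rid_tmul, Algebra.smul_def]
    haveI : Module.Finite K (K ⊗[R] V) := inferInstance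
    set x₀ : K ⊗[R] V := ((LinearMap.BilinForm.baseChange K ω).toDual hK).symm ψK with hx₀
    have hx₀eval : ∀ y : K ⊗[R] V, (LinearMap.BilinForm.baseChange K ω) x₀ y = ψK y :=
      fun y => LinearMap.BilinForm.apply_toDual_symm_apply (hB := hK) ψK y
    -- clear denominators of x₀
    set b := Module.Free.chooseBasis R V with hb
    set bK := b.baseChange K with hbK
    obtain ⟨s, hs⟩ := IsLocalization.exist_integer_multiples_of_finite
      (nonZeroDivisors R) (fun i => bK.repr x₀ i)
    choose a ha using hs
    set v : V := ∑ i, a i • b i with hv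
    have hsv : (1 : K) ⊗ₜ[R] v = (s : R) • x₀ := by
      apply bK.repr.injective
      ext i
      have h1 : bK.repr ((1 : K) ⊗ₜ[R] v) i = algebraMap R K (b.repr v i) := by
        rw [hbK, Module.Basis.baseChange_repr_tmul]
        simp [Algebra.smul_def]
      have h2 : b.repr v i = a i := by
        rw [hv, Module.Basis.repr_sum_self]
      rw [h1, h2, ← algebraMap_smul K ((s : R)) x₀, map_smul, Finsupp.smul_apply]
      have := ha i
      rw [this]
      simp [Algebra.smul_def]
    -- conclude : ω v w = s * ψ w for all w
    have key : ∀ w : V, ω v w = (s : R) * ψ w := by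
      intro w
      have h1 : (LinearMap.BilinForm.baseChange K ω) ((1:K) ⊗ₜ[R] v) ((1:K) ⊗ₜ[R] w)
          = algebraMap R K (ω v w) := by
        rw [LinearMap.BilinForm.baseChange_tmul]
        simp [Algebra.smul_def]
      have h2 : (LinearMap.BilinForm.baseChange K ω) ((1:K) ⊗ₜ[R] v) ((1:K) ⊗ₜ[R] w)
          = algebraMap R K ((s : R) * ψ w) := by
        rw [hsv, ← algebraMap_smul K ((s : R)) x₀, map_smul, LinearMap.smul_apply, hx₀eval,
          hψKtmul, smul_eq_mul, map_mul]
      exact IsFractionRing.injective R K (h1.symm.trans h2)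
    refine ⟨(s : R), nonZeroDivisors.coe_ne_zero s, ?_⟩
    rw [← map_smul, Submodule.mkQ_apply, Submodule.Quotient.mk_eq_zero]
    refine ⟨v, ?_⟩
    have hfv : ω.compl₂ W.subtype v = (s : R) • φ := by
      ext w
      simp only [LinearMap.compl₂_apply, Submodule.coe_subtype, LinearMap.smul_apply,
        smul_eq_mul]
      rw [key w]
      congr 1
      simp [hψ, Submodule.linearProjOfIsCompl, Submodule.projectionOnto_apply_left hUw w]
    rw [hf, LinearMap.comp_apply, hfv, LinearEquiv.coe_coe, map_smul, hφ,
      LinearEquiv.apply_symm_apply]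
  have hdual : Module.finrank R (ιW → R) = t := by
    rw [Module.finrank_pi, ← hWrank, Module.finrank_eq_card_chooseBasisIndex]
  -- finrank of range f equals finrank of Dual R W
  have hrange : Module.finrank R (LinearMap.range f) = t := by
    have h := Submodule.rank_quotient_add_rank (LinearMap.range f)
    rw [htors, zero_add, ← Module.finrank_eq_rank R, ← Module.finrank_eq_rank R] at h
    rw [← hdual]
    exact_mod_cast h
  have hquot : Module.finrank R (V ⧸ N) = t := by
    rw [equot.finrank_eq, hrange]
  -- rank-nullity
  have hNrank : Module.finrank R N = 2 * m - t := by
    have h := Submodule.rank_quotient_add_rank N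
    rw [← Module.finrank_eq_rank R, ← Module.finrank_eq_rank R, ← Module.finrank_eq_rank R,
      hquot, hrank] at h
    have hnat : t + Module.finrank R N = 2 * m := by exact_mod_cast h
    omega
  rw [hNperp]
  exact ⟨inferInstance, hNrank, ⟨LinearMap.ker p, hcompl⟩⟩
end

section
/- Let R be a complete discrete valuation ring with residue field k, let V be a free R-module of rank 2m with a symplectic form ω (ω_K and ω_k nondegenerate), and let W be a free direct summand of V of rank t. Then the image of W^⊥ ⊗_R k in V_k := V ⊗_R k equals the orthogonal complement (W_k)^⊥ of the image W_k of W ⊗_R k with respect to the induced form ω_k. -/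
/-!
STATEMENT 17: Let `R` be a complete discrete valuation ring with residue field `k`, let `V` be a
free `R`-module of rank `2m` with a symplectic form `ω` (`ω_K` and `ω_k` nondegenerate), and let
`W` be a free direct summand of `V` of rank `t`.  Then the image of `W^⊥ ⊗_R k` in
`V_k := V ⊗_R k` equals the orthogonal complement `(W_k)^⊥` of the image `W_k` of `W ⊗_R k`
with respect to the induced form `ω_k`.
-/

open TensorProduct

section Aux

variable {R : Type*} [CommRing R] {V : Type*} [AddCommGroup V] [Module R V]

lemma mem_symplecticPerp_iff {ω : V →ₗ[R] V →ₗ[R] R} {W : Submodule R V} {v : V} :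
    v ∈ symplecticPerp ω W ↔ ∀ w ∈ W, ω v w = 0 := Iff.rfl

lemma range_subtype_baseChange (A : Type*) [CommRing A] [Algebra R A] (p : Submodule R V) :
    LinearMap.range (p.subtype.baseChange A) = p.baseChange A := by
  apply le_antisymm
  · rintro x ⟨y, rfl⟩
    induction y using TensorProduct.induction_on with
    | zero => simp
    | tmul a w => simpa using Submodule.tmul_mem_baseChange_of_mem a w.2
    | add y z hy hz => rw [map_add]; exact Submodule.add_mem _ hy hz
  · rw [Submodule.baseChange_eq_span, Submodule.span_le]
    rintro x ⟨w, hw, rfl⟩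
    exact ⟨(1 : A) ⊗ₜ (⟨w, hw⟩ : p), by simp⟩

lemma finrank_baseChange_of_injective [Nontrivial R] (F : Type*) [Field F] [Algebra R F]
    (p : Submodule R V) [Module.Free R p] [Module.Finite R p]
    (hinj : Function.Injective (p.subtype.baseChange F)) :
    Module.finrank F (p.baseChange F) = Module.finrank R p := by
  rw [← range_subtype_baseChange F p, LinearMap.finrank_range_of_inj hinj,
    Module.finrank_baseChange]

lemma finrank_baseChange_of_isCompl [Nontrivial R] (F : Type*) [Field F] [Algebra R F]
    {p q : Submodule R V} (h : IsCompl p q) [Module.Free R p] [Module.Finite R p] :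
    Module.finrank F (p.baseChange F) = Module.finrank R p := by
  apply finrank_baseChange_of_injective
  have hcomp : (Submodule.projectionOnto p q h).baseChange F ∘ₗ
      p.subtype.baseChange F = LinearMap.id := by
    rw [← LinearMap.baseChange_comp, Submodule.projectionOnto_comp_subtype,
      LinearMap.baseChange_id]
  intro x y hxy
  have h2 := congrArg (fun z => (Submodule.projectionOnto p q h).baseChange F z) hxy
  simp only [← LinearMap.comp_apply, hcomp, LinearMap.id_apply] at h2
  exact h2

lemma perp_baseChange_le (A : Type*) [CommRing A] [Algebra R A]
    (ω : V →ₗ[R] V →ₗ[R] R) (W : Submodule R V) :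
    (symplecticPerp ω W).baseChange A ≤
      symplecticPerp (LinearMap.BilinForm.baseChange A ω) (W.baseChange A) := by
  rw [Submodule.baseChange_eq_span, Submodule.span_le]
  rintro x ⟨v, hv, rfl⟩
  intro w hw
  have hsub : W.baseChange A ≤
      LinearMap.ker (LinearMap.BilinForm.baseChange A ω ((1 : A) ⊗ₜ[R] v)) := by
    rw [Submodule.baseChange_eq_span, Submodule.span_le]
    rintro y ⟨u, hu, rfl⟩
    simp [LinearMap.mem_ker, LinearMap.BilinForm.baseChange_tmul, hv u hu]
  exact hsub hw

lemma skew_of_alt (ω : V →ₗ[R] V →ₗ[R] R) (halt : ∀ v, ω v v = 0) :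
    ∀ v w, ω v w + ω w v = 0 := by
  intro v w
  have h2 := halt (v + w)
  simp only [map_add, LinearMap.add_apply, halt v, halt w, zero_add, add_zero] at h2
  linear_combination h2

lemma baseChange_skew (A : Type*) [CommRing A] [Algebra R A]
    {ω : V →ₗ[R] V →ₗ[R] R} (hskew : ∀ v w, ω v w + ω w v = 0) :
    ∀ x y, LinearMap.BilinForm.baseChange A ω x y
      + LinearMap.BilinForm.baseChange A ω y x = 0 := by
  intro x y
  induction x using TensorProduct.induction_on with
  | zero => simp
  | tmul a v =>
    induction y using TensorProduct.induction_on with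
    | zero => simp
    | tmul b w =>
      rw [LinearMap.BilinForm.baseChange_tmul, LinearMap.BilinForm.baseChange_tmul,
        mul_comm b a, ← add_smul, hskew v w, zero_smul]
    | add y z hy hz =>
      simp only [map_add, LinearMap.add_apply]
      linear_combination hy + hz
  | add x z hx hz =>
    simp only [map_add, LinearMap.add_apply]
    linear_combination hx + hz

lemma baseChange_alt (A : Type*) [CommRing A] [Algebra R A]
    {ω : V →ₗ[R] V →ₗ[R] R} (halt : ∀ v, ω v v = 0) :
    ∀ x, LinearMap.BilinForm.baseChange A ω x x = 0 := by
  have hskew := baseChange_skew A (skew_of_alt ω halt)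
  intro x
  induction x using TensorProduct.induction_on with
  | zero => simp
  | tmul a v => rw [LinearMap.BilinForm.baseChange_tmul, halt v, zero_smul]
  | add x y hx hy =>
    have := hskew x y
    simp only [map_add, LinearMap.add_apply]
    linear_combination hx + hy + this

lemma symplecticPerp_eq_orthogonal {B : LinearMap.BilinForm R V}
    (hskew : ∀ x y, B x y + B y x = 0) (N : Submodule R V) :
    symplecticPerp B N = B.orthogonal N := by
  ext x
  rw [mem_symplecticPerp_iff, LinearMap.BilinForm.mem_orthogonal_iff]
  constructor
  · intro h n hn
    have := hskew x n
    rw [h n hn, zero_add] at this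
    exact this
  · intro h n hn
    have := hskew x n
    rw [h n hn, add_zero] at this
    exact this

end Aux

theorem statement17
    (R : Type*) [CommRing R] [IsDomain R] [IsDiscreteValuationRing R]
    (π : R) (hπ : Irreducible π) [IsAdicComplete (Ideal.span {π}) R]
    (K : Type*) [Field K] [Algebra R K] [IsFractionRing R K]
    (V : Type*) [AddCommGroup V] [Module R V] [Module.Free R V] [Module.Finite R V]
    (m : ℕ) (hrank : Module.finrank R V = 2 * m)
    (ω : V →ₗ[R] V →ₗ[R] R)
    (halt : ∀ v : V, ω v v = 0)
    (hK : (LinearMap.BilinForm.baseChange K ω).Nondegenerate)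
    (hk : (LinearMap.BilinForm.baseChange (IsLocalRing.ResidueField R) ω).Nondegenerate)
    (W : Submodule R V) (t : ℕ)
    (hWfree : Module.Free R W) (hWrank : Module.finrank R W = t)
    (hWsummand : ∃ U : Submodule R V, IsCompl W U) :
    (symplecticPerp ω W).baseChange (IsLocalRing.ResidueField R) =
      symplecticPerp (LinearMap.BilinForm.baseChange (IsLocalRing.ResidueField R) ω)
        (W.baseChange (IsLocalRing.ResidueField R)) := by
  classical
  obtain ⟨U, hU⟩ := hWsummand
  haveI := hWfree
  set k := IsLocalRing.ResidueField R with hk_def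
  set P := symplecticPerp ω W with hPdef
  have hskewR := skew_of_alt ω halt
  haveI : IsNoetherian R V := isNoetherian_of_isNoetherianRing_of_finite R V
  haveI : Module.Finite R W := Module.IsNoetherian.finite R W
  haveI : Module.Finite R P := Module.IsNoetherian.finite R P
  haveI : Module.Free R P := inferInstance
  haveI : FiniteDimensional k (k ⊗[R] V) := inferInstance
  -- dimension of the base change of W
  have hWk : Module.finrank k (W.baseChange k) = t := by
    rw [finrank_baseChange_of_isCompl k hU, hWrank]
  have hVk : Module.finrank k (k ⊗[R] V) = 2 * m := by
    rw [Module.finrank_baseChange, hrank]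
  have htm : t ≤ 2 * m := by
    rw [← hWk, ← hVk]; exact Submodule.finrank_le _
  -- dimension of the RHS
  have hRHS : Module.finrank k
      (symplecticPerp (LinearMap.BilinForm.baseChange k ω) (W.baseChange k)) = 2 * m - t := by
    rw [symplecticPerp_eq_orthogonal (baseChange_skew k hskewR),
      LinearMap.BilinForm.finrank_orthogonal hk, hVk, hWk]
  -- P is a direct summand
  have tf : ∀ (r : R) (v : V), r • v ∈ P → r ≠ 0 → v ∈ P := by
    intro r v h hr w hw
    have h2 := h w hw
    rw [map_smul, LinearMap.smul_apply, smul_eq_mul] at h2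
    exact (mul_eq_zero.mp h2).resolve_left hr
  haveI : NoZeroSMulDivisors R (V ⧸ P) := by
    constructor
    intro r x h
    by_cases hr : r = 0
    · exact Or.inl hr
    · right
      obtain ⟨v, rfl⟩ := P.mkQ_surjective x
      rw [← map_smul, Submodule.mkQ_apply, Submodule.Quotient.mk_eq_zero] at h
      rw [Submodule.mkQ_apply, Submodule.Quotient.mk_eq_zero]
      exact tf r v h hr
  haveI : Module.Finite R (V ⧸ P) := Module.Finite.quotient R P
  haveI : Module.Free R (V ⧸ P) := inferInstance
  obtain ⟨s, hs⟩ := Module.projective_lifting_property P.mkQ LinearMap.id P.mkQ_surjective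
  have hPcompl : IsCompl P (LinearMap.range s) := by
    constructor
    · rw [Submodule.disjoint_def]
      rintro x hxP ⟨y, rfl⟩
      have : y = 0 := by
        have := LinearMap.congr_fun hs y
        simp only [LinearMap.comp_apply, LinearMap.id_apply, Submodule.mkQ_apply] at this
        rw [← this, Submodule.Quotient.mk_eq_zero]
        exact hxP
      rw [this, map_zero]
    · rw [codisjoint_iff, eq_top_iff]
      intro v _
      have hmem : v - s (P.mkQ v) ∈ P := by
        rw [← Submodule.Quotient.mk_eq_zero, ← Submodule.mkQ_apply, map_sub]
        have := LinearMap.congr_fun hs (P.mkQ v)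
        simp only [LinearMap.comp_apply, LinearMap.id_apply] at this
        rw [this, sub_self]
      have : v = (v - s (P.mkQ v)) + s (P.mkQ v) := by abel
      rw [this]
      exact Submodule.add_mem_sup hmem ⟨P.mkQ v, rfl⟩
  -- dimension of the LHS
  have hLHS : Module.finrank k (P.baseChange k) = Module.finrank R P :=
    finrank_baseChange_of_isCompl k hPcompl
  -- lower bound on finrank R P via rank-nullity
  have hdim : 2 * m ≤ t + Module.finrank R P := by
    set φ : V →ₗ[R] (Module.Dual R W) := ω.compl₂ W.subtype with hφdef
    have hker : LinearMap.ker φ = P := by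
      ext v
      simp only [LinearMap.mem_ker, hPdef, mem_symplecticPerp_iff]
      constructor
      · intro h w hw
        have := LinearMap.congr_fun h ⟨w, hw⟩
        simpa [hφdef] using this
      · intro h
        ext w
        simpa [hφdef] using h w w.2
    obtain ⟨⟨ι, b⟩⟩ := Module.Free.exists_basis (R := R) (M := W)
    haveI : Finite ι := Module.Finite.finite_basis b
    haveI : Fintype ι := Fintype.ofFinite ι
    haveI : Module.Free R (Module.Dual R W) := Module.Free.of_basis b.dualBasis
    haveI : Module.Finite R (Module.Dual R W) := Module.Finite.of_basis b.dualBasis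
    have hdual : Module.finrank R (Module.Dual R ↥W) = t := by
      rw [Module.finrank_eq_card_basis b.dualBasis, ← Module.finrank_eq_card_basis b, hWrank]
    haveI : Module.Finite R (LinearMap.range φ) := Module.Finite.range φ
    have hrange : Module.finrank R (LinearMap.range φ) ≤ t := by
      rw [← hdual]; exact Submodule.finrank_le _
    haveI : Module.IsTorsionFree R (Module.Dual R ↥W) :=
      inferInstance
    haveI : Module.IsTorsionFree R (LinearMap.range φ) :=
      inferInstance
    haveI : Module.Free R (LinearMap.range φ) :=
      Module.free_of_finite_type_torsion_free' (R := R) (M := ↥(LinearMap.range φ))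
    have h1 := LinearMap.lift_rank_range_add_rank_ker φ
    rw [hker] at h1
    have e1 : Module.rank R V = ((2 * m : ℕ) : Cardinal) := by
      rw [← Module.finrank_eq_rank, hrank]
    have e2 : Module.rank R P = ((Module.finrank R P : ℕ) : Cardinal) :=
      (Module.finrank_eq_rank R P).symm
    have e3 : Module.rank R (LinearMap.range φ)
        = ((Module.finrank R (LinearMap.range φ) : ℕ) : Cardinal) :=
      (Module.finrank_eq_rank R (LinearMap.range φ)).symm
    rw [e1, e2, e3] at h1
    simp only [Cardinal.lift_natCast, ← Nat.cast_add, Nat.cast_inj] at h1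
    omega
  -- conclude
  refine Submodule.eq_of_le_of_finrank_le (perp_baseChange_le k ω W) ?_
  rw [hRHS, hLHS]
  omega
end
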